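/- arXiv:1411.2498 — 10 statements merged into one kernel-verified Lean document; each statement's English description precedes it below -/
import Mathlib

section
/- Let q > 1, γ > 0, δ ∈ ℝ and a > 0 be real numbers, let S = {b : ℝ | b > 0 ∧ γ·b + δ > 0}, and let F = a/(q−1) − q·δ/((q−1)·γ). Then the function g(b) = Real.log (γ·b + δ) − q · Real.log (b + a) is strictly monotone increasing on S ∩ {b | b ≤ F} and strictly monotone decreasing on S ∩ {b | F ≤ b}. -/
/-- For `q > 1`, the common-goal stage objective
`g(b) = log (γ·b + δ) − q · log (b + a)` is strictly increasing on
`S ∩ {b ≤ F}` and strictly decreasing on `S ∩ {F ≤ b}`, where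
`S = {b | b > 0 ∧ γ·b + δ > 0}` and `F = a/(q−1) − q·δ/((q−1)·γ)`. -/
theorem stmt_0 (q γ δ a : ℝ) (hq : 1 < q) (hγ : 0 < γ) (ha : 0 < a)
    (S : Set ℝ) (hS : S = {b : ℝ | b > 0 ∧ γ * b + δ > 0})
    (F : ℝ) (hF : F = a / (q - 1) - q * δ / ((q - 1) * γ))
    (g : ℝ → ℝ) (hg : ∀ b, g b = Real.log (γ * b + δ) - q * Real.log (b + a)) :
    StrictMonoOn g (S ∩ {b : ℝ | b ≤ F}) ∧ StrictAntiOn g (S ∩ {b : ℝ | F ≤ b}) := by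
  have hq1 : (0:ℝ) < q - 1 := by linarith
  have hSeq : S = Set.Ioi (max 0 (-δ/γ)) := by
    rw [hS]; ext b
    simp only [Set.mem_setOf_eq, Set.mem_Ioi, max_lt_iff]
    constructor
    · rintro ⟨h1, h2⟩
      exact ⟨h1, by rw [div_lt_iff₀ hγ] at *; nlinarith⟩
    · rintro ⟨h1, h2⟩
      refine ⟨h1, ?_⟩
      rw [div_lt_iff₀ hγ] at h2; nlinarith
  have hSopen : IsOpen S := by rw [hSeq]; exact isOpen_Ioi
  have hSconv : Convex ℝ S := by rw [hSeq]; exact convex_Ioi _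
  -- derivative
  have hderiv : ∀ x ∈ S, HasDerivAt g (γ / (γ * x + δ) - q * (1 / (x + a))) x := by
    intro x hx
    rw [hS] at hx
    obtain ⟨hx0, hxγ⟩ := hx
    have hxa : x + a > 0 := by linarith
    have h1 : HasDerivAt (fun b => Real.log (γ * b + δ)) (γ / (γ * x + δ)) x := by
      have hlin : HasDerivAt (fun b : ℝ => γ * b + δ) γ x := by
        simpa using ((hasDerivAt_id x).const_mul γ).add_const δ
      simpa [Function.comp_def, div_eq_mul_inv, mul_comm] using (Real.hasDerivAt_log (ne_of_gt hxγ)).comp x hlin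
    have h2 : HasDerivAt (fun b => Real.log (b + a)) (1 / (x + a)) x := by
      have hlin : HasDerivAt (fun b : ℝ => b + a) 1 x := (hasDerivAt_id x).add_const a
      simpa [Function.comp_def, one_div] using (Real.hasDerivAt_log (ne_of_gt hxa)).comp x hlin
    have := h1.sub ((h2.const_mul q))
    have heq : g = fun b => Real.log (γ * b + δ) - q * Real.log (b + a) := funext hg
    rw [heq]
    exact this
  have hcont : ContinuousOn g S := fun x hx => ((hderiv x hx).continuousAt).continuousWithinAt
  -- sign of derivative
  have hsign : ∀ x ∈ S, (x < F → 0 < γ / (γ * x + δ) - q * (1 / (x + a))) ∧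
      (F < x → γ / (γ * x + δ) - q * (1 / (x + a)) < 0) := by
    intro x hx
    rw [hS] at hx
    obtain ⟨hx0, hxγ⟩ := hx
    have hxa : x + a > 0 := by linarith
    have hFk : F * ((q - 1) * γ) = a * γ - q * δ := by
      rw [hF]; field_simp
    constructor
    · intro hxF
      rw [sub_pos, mul_one_div, div_lt_div_iff₀ hxa hxγ]
      nlinarith [mul_lt_mul_of_pos_right hxF (mul_pos hq1 hγ)]
    · intro hFx
      rw [sub_neg, mul_one_div, div_lt_div_iff₀ hxγ hxa]
      nlinarith [mul_lt_mul_of_pos_right hFx (mul_pos hq1 hγ)]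
  constructor
  · apply strictMonoOn_of_deriv_pos (hSconv.inter (convex_Iic F))
    · exact hcont.mono Set.inter_subset_left
    · intro x hx
      have hx' : x ∈ S ∩ Set.Iio F := by
        have h1 := interior_subset hx
        have h2 : x ∈ interior (Set.Iic F) :=
          interior_mono Set.inter_subset_right hx
        rw [interior_Iic] at h2
        exact ⟨h1.1, h2⟩
      rw [(hderiv x hx'.1).deriv]
      exact (hsign x hx'.1).1 hx'.2
  · apply strictAntiOn_of_deriv_neg (hSconv.inter (convex_Ici F))
    · exact hcont.mono Set.inter_subset_left
    · intro x hx
      have hx' : x ∈ S ∩ Set.Ioi F := by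
        have h1 := interior_subset hx
        have h2 : x ∈ interior (Set.Ici F) :=
          interior_mono Set.inter_subset_right hx
        rw [interior_Ici] at h2
        exact ⟨h1.1, h2⟩
      rw [(hderiv x hx'.1).deriv]
      exact (hsign x hx'.1).2 hx'.2
end

section
/- Let q > 1, γ > 0, δ ∈ ℝ, a > 0, and 0 < lo ≤ hi with γ·lo + δ > 0. Let F = a/(q−1) − q·δ/((q−1)·γ) and let g(b) = Real.log (γ·b + δ) − q · Real.log (b + a). Then the point c = max lo (min F hi) (the clamp of F to [lo,hi]) is the unique maximizer of g on the interval [lo, hi]: for every b ∈ [lo, hi] with b ≠ c one has g(b) < g(c). -/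
/-- For `q > 1`, the clamp `c = max lo (min F hi)` of the
unconstrained best response `F` to `[lo, hi]` is the unique maximizer of
`g(b) = log (γ·b + δ) − q · log (b + a)` on `[lo, hi]`. -/
theorem stmt_1 (q γ δ a lo hi : ℝ) (hq : 1 < q) (hγ : 0 < γ) (ha : 0 < a)
    (hlo : 0 < lo) (hlohi : lo ≤ hi) (hpos : γ * lo + δ > 0)
    (F : ℝ) (hF : F = a / (q - 1) - q * δ / ((q - 1) * γ))
    (g : ℝ → ℝ) (hg : ∀ b, g b = Real.log (γ * b + δ) - q * Real.log (b + a))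
    (c : ℝ) (hc : c = max lo (min F hi)) :
    ∀ b ∈ Set.Icc lo hi, b ≠ c → g b < g c := by
  have hgfun : g = fun b => Real.log (γ * b + δ) - q * Real.log (b + a) := funext hg
  subst hgfun
  have hq1 : 0 < q - 1 := by linarith
  have hPos : ∀ x : ℝ, lo ≤ x → 0 < γ * x + δ := by
    intro x hx; nlinarith
  have hQpos : ∀ x : ℝ, lo ≤ x → 0 < x + a := by
    intro x hx; linarith
  have hderiv : ∀ x : ℝ, lo ≤ x →
      HasDerivAt (fun b => Real.log (γ * b + δ) - q * Real.log (b + a))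
        (γ / (γ * x + δ) - q / (x + a)) x := by
    intro x hx
    have hP := hPos x hx
    have hQ := hQpos x hx
    have h1 : HasDerivAt (fun b : ℝ => γ * b + δ) γ x := by
      simpa using ((hasDerivAt_id x).const_mul γ).add_const δ
    have h2 : HasDerivAt (fun b : ℝ => Real.log (γ * b + δ)) (γ / (γ * x + δ)) x := by
      have := (Real.hasDerivAt_log hP.ne').comp x h1
      simpa [div_eq_inv_mul, Function.comp_def] using this
    have h3 : HasDerivAt (fun b : ℝ => b + a) 1 x := (hasDerivAt_id x).add_const a
    have h4 : HasDerivAt (fun b : ℝ => Real.log (b + a)) (1 / (x + a)) x := by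
      have := (Real.hasDerivAt_log hQ.ne').comp x h3
      simpa [div_eq_inv_mul, Function.comp_def] using this
    have := h2.sub (h4.const_mul q)
    simpa [mul_one_div, Pi.sub_def, div_eq_mul_inv] using this
  have hcl : lo ≤ c := hc ▸ le_max_left _ _
  have hch : c ≤ hi := by
    rw [hc]; exact max_le hlohi (min_le_right _ _)
  -- key algebraic fact
  have hF' : F * ((q - 1) * γ) = a * γ - q * δ := by
    rw [hF]; field_simp
  have hkey : ∀ x : ℝ, (x < F → q * (γ * x + δ) < γ * (x + a)) ∧
      (F < x → γ * (x + a) < q * (γ * x + δ)) := by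
    intro x
    constructor
    · intro h
      have h' : x * ((q - 1) * γ) < F * ((q - 1) * γ) :=
        mul_lt_mul_of_pos_right h (by positivity)
      rw [hF'] at h'
      nlinarith
    · intro h
      have h' : F * ((q - 1) * γ) < x * ((q - 1) * γ) :=
        mul_lt_mul_of_pos_right h (by positivity)
      rw [hF'] at h'
      nlinarith
  have hmono : StrictMonoOn (fun b => Real.log (γ * b + δ) - q * Real.log (b + a))
      (Set.Icc lo c) := by
    apply strictMonoOn_of_deriv_pos (convex_Icc _ _)
    · exact fun x hx => (hderiv x hx.1).continuousAt.continuousWithinAt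
    · intro x hx
      rw [interior_Icc] at hx
      rw [(hderiv x hx.1.le).deriv]
      have hxF : x < F := by
        have : x < min F hi := by
          rcases lt_max_iff.mp (hc ▸ hx.2) with h | h
          · exact absurd h (not_lt.mpr hx.1.le)
          · exact h
        exact lt_of_lt_of_le this (min_le_left _ _)
      have hP := hPos x hx.1.le
      have hQ := hQpos x hx.1.le
      rw [sub_pos, div_lt_div_iff₀ hQ hP]
      have := (hkey x).1 hxF
      nlinarith
  have hanti : StrictAntiOn (fun b => Real.log (γ * b + δ) - q * Real.log (b + a))
      (Set.Icc c hi) := by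
    apply strictAntiOn_of_deriv_neg (convex_Icc _ _)
    · exact fun x hx => (hderiv x (le_trans hcl hx.1)).continuousAt.continuousWithinAt
    · intro x hx
      rw [interior_Icc] at hx
      have hxlo : lo ≤ x := le_trans hcl hx.1.le
      rw [(hderiv x hxlo).deriv]
      have hFx : F < x := by
        have hmx : min F hi < x := lt_of_le_of_lt (hc ▸ le_max_right _ _) hx.1
        rcases min_lt_iff.mp hmx with h | h
        · exact h
        · exact absurd hx.2 (not_lt.mpr h.le)
      have hP := hPos x hxlo
      have hQ := hQpos x hxlo
      rw [sub_neg, div_lt_div_iff₀ hP hQ]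
      have := (hkey x).2 hFx
      nlinarith
  intro b hb hbc
  rcases lt_or_gt_of_ne hbc with h | h
  · exact hmono ⟨hb.1, h.le⟩ ⟨hcl, le_refl c⟩ h
  · exact hanti ⟨le_refl c, hch⟩ ⟨h.le, hb.2⟩ h
end

section
/- Let 0 < q < 1, γ > 0, δ ∈ ℝ, a > 0, and 0 < lo ≤ hi with γ·lo + δ > 0, and let g(b) = Real.log (γ·b + δ) − q · Real.log (b + a). Then every interior point of the interval is strictly suboptimal: for every b with lo < b < hi, g(b) < max (g lo) (g hi). In particular every maximizer of g on [lo, hi] lies in {lo, hi}. -/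
/-- For `0 < q < 1`, every interior point of `[lo, hi]` is
strictly suboptimal for `g(b) = log (γ·b + δ) − q · log (b + a)`; in
particular every maximizer of `g` on `[lo, hi]` lies in `{lo, hi}`. -/
theorem stmt_2 (q γ δ a lo hi : ℝ) (hq0 : 0 < q) (hq1 : q < 1) (hγ : 0 < γ) (ha : 0 < a)
    (hlo : 0 < lo) (hlohi : lo ≤ hi) (hpos : γ * lo + δ > 0)
    (g : ℝ → ℝ) (hg : ∀ b, g b = Real.log (γ * b + δ) - q * Real.log (b + a)) :
    (∀ b, lo < b → b < hi → g b < max (g lo) (g hi)) ∧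
    (∀ b ∈ Set.Icc lo hi, (∀ x ∈ Set.Icc lo hi, g x ≤ g b) → b = lo ∨ b = hi) := by
  have hgf : g = fun b => Real.log (γ * b + δ) - q * Real.log (b + a) := funext hg
  subst hgf
  have hP : ∀ b : ℝ, lo ≤ b → 0 < γ * b + δ := by
    intro b hb; nlinarith
  have hA : ∀ b : ℝ, lo ≤ b → 0 < b + a := by intro b hb; linarith
  have hd : ∀ b : ℝ, lo ≤ b →
      HasDerivAt (fun b => Real.log (γ * b + δ) - q * Real.log (b + a))
        (γ / (γ * b + δ) - q * (1 / (b + a))) b := by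
    intro b hb
    have h1 : HasDerivAt (fun b : ℝ => γ * b + δ) γ b := by
      simpa using ((hasDerivAt_id b).const_mul γ).add_const δ
    have h2 : HasDerivAt (fun b : ℝ => Real.log (γ * b + δ)) (γ / (γ * b + δ)) b := by
      have := (Real.hasDerivAt_log (ne_of_gt (hP b hb))).comp b h1
      simpa [div_eq_inv_mul, Function.comp_def] using this
    have h3 : HasDerivAt (fun b : ℝ => b + a) 1 b := (hasDerivAt_id b).add_const a
    have h4 : HasDerivAt (fun b : ℝ => Real.log (b + a)) (1 / (b + a)) b := by
      have := (Real.hasDerivAt_log (ne_of_gt (hA b hb))).comp b h3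
      simpa [one_div, Function.comp_def] using this
    simpa [Pi.sub_def] using h2.sub (h4.const_mul q)
  have hcont : ∀ s : Set ℝ, s ⊆ Set.Ici lo →
      ContinuousOn (fun b => Real.log (γ * b + δ) - q * Real.log (b + a)) s := by
    intro s hs x hx
    exact ((hd x (hs hx)).differentiableAt.continuousAt).continuousWithinAt
  have key : ∀ b, lo < b → b < hi →
      (fun b => Real.log (γ * b + δ) - q * Real.log (b + a)) b <
        max ((fun b => Real.log (γ * b + δ) - q * Real.log (b + a)) lo)
            ((fun b => Real.log (γ * b + δ) - q * Real.log (b + a)) hi) := by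
    intro b hb1 hb2
    by_cases hc : q * (γ * b + δ) < γ * (b + a)
    · -- derivative positive on (b, hi): g strictly increases to hi
      have hmono : StrictMonoOn (fun b => Real.log (γ * b + δ) - q * Real.log (b + a))
          (Set.Icc b hi) := by
        apply strictMonoOn_of_deriv_pos (convex_Icc b hi)
        · exact hcont _ (fun x hx => le_trans (le_of_lt hb1) hx.1)
        · intro x hx
          rw [interior_Icc] at hx
          have hxlo : lo ≤ x := le_of_lt (lt_trans hb1 hx.1)
          rw [(hd x hxlo).deriv]
          have hx1 := hP x hxlo
          have hx2 := hA x hxlo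
          rw [sub_pos, mul_one_div, div_lt_div_iff₀ hx2 hx1]
          nlinarith [mul_pos (mul_pos hγ (by linarith : (0:ℝ) < 1 - q))
            (by linarith [hx.1] : (0:ℝ) < x - b)]
      have := hmono (Set.left_mem_Icc.2 (le_of_lt hb2))
        (Set.right_mem_Icc.2 (le_of_lt hb2)) hb2
      exact lt_max_of_lt_right this
    · -- derivative negative on (lo, b): g strictly decreases from lo
      push_neg at hc
      have hanti : StrictAntiOn (fun b => Real.log (γ * b + δ) - q * Real.log (b + a))
          (Set.Icc lo b) := by
        apply strictAntiOn_of_deriv_neg (convex_Icc lo b)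
        · exact hcont _ (fun x hx => hx.1)
        · intro x hx
          rw [interior_Icc] at hx
          have hxlo : lo ≤ x := le_of_lt hx.1
          rw [(hd x hxlo).deriv]
          have hx1 := hP x hxlo
          have hx2 := hA x hxlo
          rw [sub_neg, mul_one_div, div_lt_div_iff₀ hx1 hx2]
          nlinarith [mul_pos (mul_pos hγ (by linarith : (0:ℝ) < 1 - q))
            (by linarith [hx.2] : (0:ℝ) < b - x)]
      have := hanti (Set.left_mem_Icc.2 (le_of_lt hb1))
        (Set.right_mem_Icc.2 (le_of_lt hb1)) hb1
      exact lt_max_of_lt_left this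
  refine ⟨key, ?_⟩
  intro b hb hmax
  rcases eq_or_lt_of_le hb.1 with h1 | h1
  · exact Or.inl h1.symm
  rcases eq_or_lt_of_le hb.2 with h2 | h2
  · exact Or.inr h2
  exfalso
  have h := key b h1 h2
  have hlo' := hmax lo (Set.left_mem_Icc.2 hlohi)
  have hhi' := hmax hi (Set.right_mem_Icc.2 hlohi)
  rcases max_cases ((fun b => Real.log (γ * b + δ) - q * Real.log (b + a)) lo)
    ((fun b => Real.log (γ * b + δ) - q * Real.log (b + a)) hi) with ⟨he, _⟩ | ⟨he, _⟩ <;>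
    rw [he] at h <;> linarith
end

section
/- Let q > 2, γ₁, γ₂ nonzero reals, δ₁, δ₂ ∈ ℝ, F_j(a) = a/(q−1) − q·δ_j/((q−1)·γ_j), and let lo₁ ≤ hi₁, lo₂ ≤ hi₂ be reals. Define T : ℝ × ℝ → ℝ × ℝ by T(a₁, a₂) = (max lo₁ (min (F₁ a₂) hi₁), max lo₂ (min (F₂ a₁) hi₂)). Then T maps the rectangle R = [lo₁,hi₁] × [lo₂,hi₂] into itself and is Lipschitz on R with constant 1/(q−1) < 1 for the sup (L∞) metric on ℝ × ℝ; consequently T has a unique fixed point p ∈ R, and for every starting point x ∈ R the iterates T^[k](x) converge to p. -/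
/-- For `q > 2`, the clamped best-response map `T` maps the
rectangle `R` into itself, is Lipschitz with constant `1/(q−1) < 1` for the
sup metric on `ℝ × ℝ`, hence has a unique fixed point in `R` to which all
best-response iterates from `R` converge. -/
theorem stmt_6 (q γ₁ γ₂ δ₁ δ₂ lo₁ hi₁ lo₂ hi₂ : ℝ) (hq : 2 < q)
    (hγ₁ : γ₁ ≠ 0) (hγ₂ : γ₂ ≠ 0) (h₁ : lo₁ ≤ hi₁) (h₂ : lo₂ ≤ hi₂)
    (F₁ F₂ : ℝ → ℝ)
    (hF₁ : ∀ x, F₁ x = x / (q - 1) - q * δ₁ / ((q - 1) * γ₁))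
    (hF₂ : ∀ x, F₂ x = x / (q - 1) - q * δ₂ / ((q - 1) * γ₂))
    (T : ℝ × ℝ → ℝ × ℝ)
    (hT : ∀ p : ℝ × ℝ, T p = (max lo₁ (min (F₁ p.2) hi₁), max lo₂ (min (F₂ p.1) hi₂)))
    (R : Set (ℝ × ℝ)) (hR : R = Set.Icc lo₁ hi₁ ×ˢ Set.Icc lo₂ hi₂) :
    Set.MapsTo T R R ∧
    LipschitzOnWith (Real.toNNReal (1 / (q - 1))) T R ∧
    1 / (q - 1) < 1 ∧
    ∃ p ∈ R, T p = p ∧ (∀ p' ∈ R, T p' = p' → p' = p) ∧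
      ∀ x ∈ R, Filter.Tendsto (fun k => T^[k] x) Filter.atTop (nhds p) := by
  have hq1 : (1:ℝ) < q - 1 := by linarith
  have hq0 : (0:ℝ) < q - 1 := by linarith
  have hKlt : 1 / (q - 1) < 1 := by
    rw [div_lt_one hq0]; linarith
  have hKpos : (0:ℝ) ≤ 1 / (q - 1) := by positivity
  have hKcoe : ((Real.toNNReal (1 / (q - 1))) : ℝ) = 1 / (q - 1) :=
    Real.coe_toNNReal _ hKpos
  -- MapsTo
  have hmaps : Set.MapsTo T R R := by
    intro x hx
    rw [hR, hT]
    constructor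
    · exact ⟨le_max_left _ _, max_le (by linarith [min_le_right (F₁ x.2) hi₁]) (min_le_right _ _)⟩
    · exact ⟨le_max_left _ _, max_le (by linarith [min_le_right (F₂ x.1) hi₂]) (min_le_right _ _)⟩
  -- Lipschitz
  have key : ∀ x y : ℝ × ℝ, dist (T x) (T y) ≤ (1 / (q - 1)) * dist x y := by
    intro x y
    have hF : ∀ (F : ℝ → ℝ) (c : ℝ), (∀ z, F z = z / (q - 1) - c) →
        ∀ a b : ℝ, |F a - F b| = |a - b| / (q - 1) := by
      intro F c hFc a b
      rw [hFc, hFc]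
      rw [show a / (q - 1) - c - (b / (q - 1) - c) = (a - b) / (q - 1) by ring]
      rw [abs_div, abs_of_pos hq0]
    have h1 : |F₁ x.2 - F₁ y.2| = |x.2 - y.2| / (q - 1) := hF F₁ _ hF₁ _ _
    have h2 : |F₂ x.1 - F₂ y.1| = |x.1 - y.1| / (q - 1) := hF F₂ _ hF₂ _ _
    have clamp : ∀ (lo hi u v : ℝ), |max lo (min u hi) - max lo (min v hi)| ≤ |u - v| := by
      intro lo hi u v
      calc |max lo (min u hi) - max lo (min v hi)| ≤ max |lo - lo| |min u hi - min v hi| :=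
            abs_max_sub_max_le_max _ _ _ _
        _ ≤ |u - v| := by
            rw [sub_self, abs_zero]
            refine max_le (abs_nonneg _) ?_
            calc |min u hi - min v hi| ≤ max |u - v| |hi - hi| := abs_min_sub_min_le_max _ _ _ _
              _ ≤ |u - v| := by rw [sub_self, abs_zero]; exact max_le le_rfl (abs_nonneg _)
    rw [hT x, hT y, Prod.dist_eq]
    have d1 : dist x.1 y.1 ≤ dist x y := le_max_left _ _
    have d2 : dist x.2 y.2 ≤ dist x y := le_max_right _ _
    simp only [Real.dist_eq] at *
    apply max_le
    · calc |max lo₁ (min (F₁ x.2) hi₁) - max lo₁ (min (F₁ y.2) hi₁)| ≤ |F₁ x.2 - F₁ y.2| :=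
            clamp _ _ _ _
        _ = |x.2 - y.2| / (q - 1) := h1
        _ ≤ 1 / (q - 1) * dist x y := by
            rw [div_eq_mul_inv, one_div, mul_comm]
            exact mul_le_mul_of_nonneg_left (le_trans d2 le_rfl) (by positivity)
    · calc |max lo₂ (min (F₂ x.1) hi₂) - max lo₂ (min (F₂ y.1) hi₂)| ≤ |F₂ x.1 - F₂ y.1| :=
            clamp _ _ _ _
        _ = |x.1 - y.1| / (q - 1) := h2
        _ ≤ 1 / (q - 1) * dist x y := by
            rw [div_eq_mul_inv, one_div, mul_comm]
            exact mul_le_mul_of_nonneg_left (le_trans d1 le_rfl) (by positivity)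
  have hlip : LipschitzOnWith (Real.toNNReal (1 / (q - 1))) T R := by
    apply LipschitzOnWith.of_dist_le_mul
    intro x _ y _
    rw [hKcoe]
    exact key x y
  refine ⟨hmaps, hlip, hKlt, ?_⟩
  -- fixed point via contraction on the subtype
  have hRne : R.Nonempty := by
    rw [hR]; exact ⟨(lo₁, lo₂), ⟨le_rfl, h₁⟩, ⟨le_rfl, h₂⟩⟩
  have hRclosed : IsClosed R := by
    rw [hR]; exact (isClosed_Icc).prod isClosed_Icc
  haveI : Nonempty R := hRne.to_subtype
  haveI : CompleteSpace R := hRclosed.completeSpace_coe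
  set f : R → R := hmaps.restrict T R R with hf
  have hflip : LipschitzWith (Real.toNNReal (1 / (q - 1))) f :=
    LipschitzOnWith.mapsToRestrict hmaps hlip
  have hcontr : ContractingWith (Real.toNNReal (1 / (q - 1))) f := by
    constructor
    · rw [← NNReal.coe_lt_one, hKcoe]; exact hKlt
    · exact hflip
  have hiter : ∀ (k : ℕ) (x : R), ((f^[k] x : R) : ℝ × ℝ) = T^[k] (x : ℝ × ℝ) := by
    intro k
    induction k with
    | zero => intro x; simp
    | succ n ih =>
      intro x
      rw [Function.iterate_succ_apply, Function.iterate_succ_apply, ih (f x)]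
      rfl
  set p := hcontr.fixedPoint f with hp
  have hTp : f p = p := hcontr.fixedPoint_isFixedPt
  have htend := fun x => hcontr.tendsto_iterate_fixedPoint x
  refine ⟨(p : ℝ × ℝ), p.2, ?_, ?_, ?_⟩
  · have := hTp
    have : f p = p := this
    calc T (p : ℝ × ℝ) = ((f p : R) : ℝ × ℝ) := rfl
      _ = (p : ℝ × ℝ) := by rw [this]
  · intro p' hp' hfix
    have hd : dist p' (p : ℝ × ℝ) ≤ 1 / (q - 1) * dist p' (p : ℝ × ℝ) := by
      calc dist p' (p : ℝ × ℝ) = dist (T p') (T (p : ℝ × ℝ)) := by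
            rw [hfix]
            congr 1
            exact (show T (p:ℝ×ℝ) = p from by
              calc T (p : ℝ × ℝ) = ((f p : R) : ℝ × ℝ) := rfl
                _ = (p : ℝ × ℝ) := by rw [show f p = p from hTp]).symm
        _ ≤ 1 / (q - 1) * dist p' (p : ℝ × ℝ) := key _ _
    by_contra hne
    have hdpos : 0 < dist p' (p : ℝ × ℝ) := dist_pos.mpr (by exact fun h => hne h)
    nlinarith
  · intro x hx
    have := htend ⟨x, hx⟩
    have heq : (fun k => T^[k] x) = fun k => ((f^[k] ⟨x, hx⟩ : R) : ℝ × ℝ) := by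
      funext k; rw [hiter k ⟨x, hx⟩]
    rw [heq]
    exact (continuous_subtype_val.tendsto p).comp this
end

section
/- Let 1 < q < 2, γ₁, γ₂ nonzero reals, δ₁, δ₂ ∈ ℝ, and define the (unclamped) best-response map T : ℝ × ℝ → ℝ × ℝ by T(a₁,a₂) = (F₁ a₂, F₂ a₁) with F_j(a) = a/(q−1) − q·δ_j/((q−1)·γ_j). Let p be the fixed point of T. Then for every x ∈ ℝ × ℝ, ‖T x − p‖∞ = (1/(q−1)) · ‖x − p‖∞ with 1/(q−1) > 1; consequently ‖T^[k] x − p‖∞ = (1/(q−1))^k · ‖x − p‖∞ for all k, so for every x ≠ p the iterates T^[k](x) diverge (the distance to p tends to infinity). -/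
/-- For `1 < q < 2`, the unclamped best-response map `T` expands
distances to its fixed point `p` by the factor `1/(q−1) > 1` in the sup norm,
so the iterates from any `x ≠ p` diverge. -/
theorem stmt_7 (q γ₁ γ₂ δ₁ δ₂ : ℝ) (hq1 : 1 < q) (hq2 : q < 2)
    (hγ₁ : γ₁ ≠ 0) (hγ₂ : γ₂ ≠ 0)
    (F₁ F₂ : ℝ → ℝ)
    (hF₁ : ∀ x, F₁ x = x / (q - 1) - q * δ₁ / ((q - 1) * γ₁))
    (hF₂ : ∀ x, F₂ x = x / (q - 1) - q * δ₂ / ((q - 1) * γ₂))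
    (T : ℝ × ℝ → ℝ × ℝ) (hT : ∀ p : ℝ × ℝ, T p = (F₁ p.2, F₂ p.1))
    (p : ℝ × ℝ) (hp : T p = p) :
    1 < 1 / (q - 1) ∧
    (∀ x : ℝ × ℝ, ‖T x - p‖ = (1 / (q - 1)) * ‖x - p‖) ∧
    (∀ (k : ℕ) (x : ℝ × ℝ), ‖T^[k] x - p‖ = (1 / (q - 1)) ^ k * ‖x - p‖) ∧
    (∀ x : ℝ × ℝ, x ≠ p →
      Filter.Tendsto (fun k => ‖T^[k] x - p‖) Filter.atTop Filter.atTop) := by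
  have hq0 : 0 < q - 1 := by linarith
  have hc1 : 1 < 1 / (q - 1) := by
    rw [lt_div_iff₀ hq0]; linarith
  have hc0 : 0 < 1 / (q - 1) := by positivity
  have key : ∀ x : ℝ × ℝ, ‖T x - p‖ = (1 / (q - 1)) * ‖x - p‖ := by
    intro x
    have h1 : (T x).1 - p.1 = (1 / (q - 1)) * (x.2 - p.2) := by
      have hp1 : (T p).1 = p.1 := by rw [hp]
      rw [hT x] at *
      rw [hT p] at hp1
      simp only at hp1 ⊢
      simp only [hF₁] at hp1 ⊢
      rw [one_div_mul_eq_div, sub_div]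
      linarith
    have h2 : (T x).2 - p.2 = (1 / (q - 1)) * (x.1 - p.1) := by
      have hp2 : (T p).2 = p.2 := by rw [hp]
      rw [hT x] at *
      rw [hT p] at hp2
      simp only at hp2 ⊢
      simp only [hF₂] at hp2 ⊢
      rw [one_div_mul_eq_div, sub_div]
      linarith
    have : ‖T x - p‖ = max ‖(T x).1 - p.1‖ ‖(T x).2 - p.2‖ := by
      rw [Prod.norm_def]; rfl
    rw [this, h1, h2, norm_mul, norm_mul]
    have hnc : ‖(1 : ℝ) / (q - 1)‖ = 1 / (q - 1) := Real.norm_of_nonneg hc0.le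
    rw [hnc, ← mul_max_of_nonneg _ _ hc0.le]
    congr 1
    rw [Prod.norm_def, max_comm]; rfl
  refine ⟨hc1, key, ?_, ?_⟩
  · have iter : ∀ (k : ℕ) (x : ℝ × ℝ), ‖T^[k] x - p‖ = (1 / (q - 1)) ^ k * ‖x - p‖ := by
      intro k
      induction k with
      | zero => intro x; simp
      | succ n ih =>
        intro x
        rw [Function.iterate_succ_apply, ih (T x), key x, pow_succ]
        ring
    exact iter
  · intro x hx
    have hnorm : 0 < ‖x - p‖ := by
      rw [norm_pos_iff]; exact sub_ne_zero_of_ne hx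
    have iter : ∀ (k : ℕ), ‖T^[k] x - p‖ = (1 / (q - 1)) ^ k * ‖x - p‖ := by
      intro k
      induction k with
      | zero => simp
      | succ n ih =>
        rw [Function.iterate_succ_apply', key, ih, pow_succ]
        ring
    simp only [iter]
    exact (tendsto_pow_atTop_atTop_of_one_lt hc1).atTop_mul_const hnorm
end

section
/- Let q > 2, γ₁, γ₂ > 0, δ₁, δ₂ ∈ ℝ, and 0 < lo_j ≤ hi_j with γ_j·lo_j + δ_j > 0 for j = 1, 2, and define u(a₁, a₂) = Real.log (γ₁·a₁ + δ₁) + Real.log (γ₂·a₂ + δ₂) − q · Real.log (a₁ + a₂) on Δ = [lo₁,hi₁] × [lo₂,hi₂]. Then there exists exactly one pair (a₁, a₂) ∈ Δ such that u(b, a₂) ≤ u(a₁, a₂) for all b ∈ [lo₁,hi₁] and u(a₁, b) ≤ u(a₁, a₂) for all b ∈ [lo₂,hi₂]; i.e. the common-goal game has a unique Nash equilibrium when q > 2. -/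
open Real Set

lemma hderiv (γ δ q s x : ℝ) (h1 : γ*x+δ ≠ 0) (h2 : x+s ≠ 0) :
    HasDerivAt (fun y => Real.log (γ*y+δ) - q*Real.log (y+s))
      (γ/(γ*x+δ) - q*(1/(x+s))) x := by
  have d1 : HasDerivAt (fun y => Real.log (γ*y+δ)) (γ/(γ*x+δ)) x := by
    simpa using (((hasDerivAt_id x).const_mul γ).add_const δ).log h1
  have d2 : HasDerivAt (fun y => Real.log (y+s)) (1/(x+s)) x := by
    simpa using ((hasDerivAt_id x).add_const s).log h2
  exact d1.sub (d2.const_mul q)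

-- strict mono on [lo, m] when m ≤ c
lemma hmono (γ δ q s lo m : ℝ) (hγ : 0 < γ) (hq : 1 < q) (hlo : 0 < lo)
    (hp : 0 < γ * lo + δ) (hs : 0 < s) (hlm : lo ≤ m)
    (hmc : m ≤ (γ*s - q*δ)/(γ*(q-1))) :
    StrictMonoOn (fun y => Real.log (γ*y+δ) - q*Real.log (y+s)) (Icc lo m) := by
  have hpos : ∀ x ∈ Icc lo m, 0 < γ*x+δ ∧ 0 < x+s := by
    intro x hx
    constructor
    · nlinarith [hx.1]
    · nlinarith [hx.1]
  apply strictMonoOn_of_deriv_pos (convex_Icc lo m)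
  · intro x hx
    exact ((hderiv γ δ q s x (hpos x hx).1.ne' (hpos x hx).2.ne').continuousAt).continuousWithinAt
  · intro x hx
    rw [interior_Icc] at hx
    have hx' : x ∈ Icc lo m := ⟨hx.1.le, hx.2.le⟩
    obtain ⟨hA, hB⟩ := hpos x hx'
    rw [(hderiv γ δ q s x hA.ne' hB.ne').deriv]
    have hxc : x < (γ*s - q*δ)/(γ*(q-1)) := lt_of_lt_of_le hx.2 hmc
    have hd : 0 < γ*(q-1) := by nlinarith
    rw [lt_div_iff₀ hd] at hxc
    have key : q * (γ*x+δ) < γ * (x+s) := by nlinarith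
    rw [sub_pos, mul_one_div, div_lt_div_iff₀ hB hA]
    linarith

lemma hanti (γ δ q s lo m hi : ℝ) (hγ : 0 < γ) (hq : 1 < q) (hlo : 0 < lo)
    (hp : 0 < γ * lo + δ) (hs : 0 < s) (hlm : lo ≤ m)
    (hcm : (γ*s - q*δ)/(γ*(q-1)) ≤ m) :
    StrictAntiOn (fun y => Real.log (γ*y+δ) - q*Real.log (y+s)) (Icc m hi) := by
  have hpos : ∀ x ∈ Icc m hi, 0 < γ*x+δ ∧ 0 < x+s := by
    intro x hx
    have : lo ≤ x := le_trans hlm hx.1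
    constructor
    · nlinarith
    · nlinarith
  apply strictAntiOn_of_deriv_neg (convex_Icc m hi)
  · intro x hx
    exact ((hderiv γ δ q s x (hpos x hx).1.ne' (hpos x hx).2.ne').continuousAt).continuousWithinAt
  · intro x hx
    rw [interior_Icc] at hx
    have hx' : x ∈ Icc m hi := ⟨hx.1.le, hx.2.le⟩
    obtain ⟨hA, hB⟩ := hpos x hx'
    rw [(hderiv γ δ q s x hA.ne' hB.ne').deriv]
    have hxc : (γ*s - q*δ)/(γ*(q-1)) < x := lt_of_le_of_lt hcm hx.1
    have hd : 0 < γ*(q-1) := by nlinarith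
    rw [div_lt_iff₀ hd] at hxc
    have key : γ * (x+s) < q * (γ*x+δ) := by nlinarith
    rw [sub_neg, mul_one_div, div_lt_div_iff₀ hA hB]
    linarith

/-- strict best response: `clamp c` is the strict maximizer. -/
lemma br_strict (γ δ q s lo hi : ℝ) (hγ : 0 < γ) (hq : 1 < q) (hlo : 0 < lo)
    (hle : lo ≤ hi) (hp : 0 < γ * lo + δ) (hs : 0 < s) (b : ℝ) (hb : b ∈ Icc lo hi)
    (hne : b ≠ max lo (min hi ((γ*s - q*δ)/(γ*(q-1))))) :
    Real.log (γ*b+δ) - q*Real.log (b+s) <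
      Real.log (γ*(max lo (min hi ((γ*s - q*δ)/(γ*(q-1)))))+δ)
        - q*Real.log ((max lo (min hi ((γ*s - q*δ)/(γ*(q-1)))))+s) := by
  set c := (γ*s - q*δ)/(γ*(q-1)) with hc
  set m := max lo (min hi c) with hm
  have hlm : lo ≤ m := le_max_left _ _
  have hmhi : m ≤ hi := max_le hle (min_le_left _ _)
  rcases lt_or_gt_of_ne hne with hlt | hgt
  · -- b < m : use strict mono on [lo, m]; here m ≤ c
    have hmc : m ≤ c := by
      have h1 : lo < m := lt_of_le_of_lt hb.1 hlt
      have h2 : lo < min hi c := by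
        by_contra h
        push_neg at h
        have : m = lo := by rw [hm]; exact max_eq_left h
        linarith [this ▸ h1]
      have : lo < c := lt_of_lt_of_le h2 (min_le_right _ _)
      rw [hm]
      exact max_le this.le (min_le_right _ _)
    exact hmono γ δ q s lo m hγ hq hlo hp hs hlm hmc
      ⟨hb.1, hlt.le⟩ ⟨hlm, le_refl m⟩ hlt
  · -- b > m : use strict anti on [m, hi]; here c ≤ m
    have hcm : c ≤ m := by
      have h1 : m < hi := lt_of_lt_of_le hgt hb.2
      have h2 : min hi c < hi := lt_of_le_of_lt (le_max_right lo _) h1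
      have h3 : min hi c = c := min_eq_right (by
        by_contra h
        push_neg at h
        rw [min_eq_left h.le] at h2
        exact lt_irrefl _ h2)
      rw [hm, h3]
      exact le_max_right _ _
    exact hanti γ δ q s lo m hi hγ hq hlo hp hs hlm hcm
      ⟨le_refl m, hmhi⟩ ⟨hgt.le, hb.2⟩ hgt

lemma clamp_lip (lo hi a b : ℝ) : |max lo (min hi a) - max lo (min hi b)| ≤ |a - b| := by
  have h1 : a - b ≤ |a - b| := le_abs_self _
  have h2 : b - a ≤ |a - b| := by rw [abs_sub_comm]; exact le_abs_self _
  have h0 : 0 ≤ |a - b| := abs_nonneg _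
  rw [abs_sub_le_iff]
  constructor <;> simp only [max_def, min_def] <;> split_ifs <;> linarith


/-- For `q > 2`, the common-goal game with payoff
`u(a₁,a₂) = log(γ₁a₁+δ₁) + log(γ₂a₂+δ₂) − q·log(a₁+a₂)` on
`Δ = [lo₁,hi₁] × [lo₂,hi₂]` has a unique Nash equilibrium. -/
theorem stmt_9 (q γ₁ γ₂ δ₁ δ₂ lo₁ hi₁ lo₂ hi₂ : ℝ) (hq : 2 < q)
    (hγ₁ : 0 < γ₁) (hγ₂ : 0 < γ₂)
    (hlo₁ : 0 < lo₁) (h₁ : lo₁ ≤ hi₁) (hlo₂ : 0 < lo₂) (h₂ : lo₂ ≤ hi₂)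
    (hp₁ : γ₁ * lo₁ + δ₁ > 0) (hp₂ : γ₂ * lo₂ + δ₂ > 0)
    (u : ℝ → ℝ → ℝ)
    (hu : ∀ a₁ a₂, u a₁ a₂ =
      Real.log (γ₁ * a₁ + δ₁) + Real.log (γ₂ * a₂ + δ₂) - q * Real.log (a₁ + a₂)) :
    ∃! p : ℝ × ℝ, p ∈ Set.Icc lo₁ hi₁ ×ˢ Set.Icc lo₂ hi₂ ∧
      (∀ b ∈ Set.Icc lo₁ hi₁, u b p.2 ≤ u p.1 p.2) ∧
      (∀ b ∈ Set.Icc lo₂ hi₂, u p.1 b ≤ u p.1 p.2) := by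
  have hq1 : 1 < q := by linarith
  set F₁ : ℝ → ℝ := fun s => max lo₁ (min hi₁ ((γ₁*s - q*δ₁)/(γ₁*(q-1)))) with hF₁
  set F₂ : ℝ → ℝ := fun s => max lo₂ (min hi₂ ((γ₂*s - q*δ₂)/(γ₂*(q-1)))) with hF₂
  have hF₁mem : ∀ x, F₁ x ∈ Icc lo₁ hi₁ := fun x =>
    ⟨le_max_left _ _, max_le h₁ (min_le_left _ _)⟩
  have hF₂mem : ∀ x, F₂ x ∈ Icc lo₂ hi₂ := fun x =>
    ⟨le_max_left _ _, max_le h₂ (min_le_left _ _)⟩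
  -- strict best responses expressed via u
  have br₁ : ∀ s ∈ Icc lo₂ hi₂, ∀ b ∈ Icc lo₁ hi₁, b ≠ F₁ s → u b s < u (F₁ s) s := by
    intro s hs b hb hne
    have hspos : 0 < s := lt_of_lt_of_le hlo₂ hs.1
    have := br_strict γ₁ δ₁ q s lo₁ hi₁ hγ₁ hq1 hlo₁ h₁ hp₁ hspos b hb hne
    rw [hu, hu]; linarith
  have br₂ : ∀ s ∈ Icc lo₁ hi₁, ∀ b ∈ Icc lo₂ hi₂, b ≠ F₂ s → u s b < u s (F₂ s) := by
    intro s hs b hb hne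
    have hspos : 0 < s := lt_of_lt_of_le hlo₁ hs.1
    have := br_strict γ₂ δ₂ q s lo₂ hi₂ hγ₂ hq1 hlo₂ h₂ hp₂ hspos b hb hne
    have e1 : Real.log (s + b) = Real.log (b + s) := by rw [add_comm]
    have e2 : Real.log (s + F₂ s) = Real.log (F₂ s + s) := by rw [add_comm]
    rw [hu, hu, e1, e2]; linarith
  -- characterization of Nash equilibria
  have char : ∀ p : ℝ × ℝ,
      (p ∈ Set.Icc lo₁ hi₁ ×ˢ Set.Icc lo₂ hi₂ ∧
        (∀ b ∈ Set.Icc lo₁ hi₁, u b p.2 ≤ u p.1 p.2) ∧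
        (∀ b ∈ Set.Icc lo₂ hi₂, u p.1 b ≤ u p.1 p.2)) ↔
      (p.1 ∈ Icc lo₁ hi₁ ∧ p.2 ∈ Icc lo₂ hi₂ ∧ p.1 = F₁ p.2 ∧ p.2 = F₂ p.1) := by
    intro p
    constructor
    · rintro ⟨⟨hm1, hm2⟩, hb1, hb2⟩
      refine ⟨hm1, hm2, ?_, ?_⟩
      · by_contra hne
        exact absurd (hb1 (F₁ p.2) (hF₁mem p.2)) (not_le.mpr (br₁ p.2 hm2 p.1 hm1 hne))
      · by_contra hne
        exact absurd (hb2 (F₂ p.1) (hF₂mem p.1)) (not_le.mpr (br₂ p.1 hm1 p.2 hm2 hne))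
    · rintro ⟨hm1, hm2, he1, he2⟩
      refine ⟨⟨hm1, hm2⟩, ?_, ?_⟩
      · intro b hb
        rcases eq_or_ne b p.1 with rfl | hne
        · exact le_refl _
        · have := br₁ p.2 hm2 b hb (he1 ▸ hne)
          rw [← he1] at this; exact this.le
      · intro b hb
        rcases eq_or_ne b p.2 with rfl | hne
        · exact le_refl _
        · have := br₂ p.1 hm1 b hb (he2 ▸ hne)
          rw [← he2] at this; exact this.le
  -- contraction estimates
  have lip₁ : ∀ x y, |F₁ x - F₁ y| ≤ |x - y| / (q-1) := by
    intro x y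
    have hd : (0:ℝ) < q - 1 := by linarith
    have e : (γ₁*x - q*δ₁)/(γ₁*(q-1)) - (γ₁*y - q*δ₁)/(γ₁*(q-1)) = (x - y)/(q-1) := by
      field_simp; ring
    calc |F₁ x - F₁ y| ≤ |(γ₁*x - q*δ₁)/(γ₁*(q-1)) - (γ₁*y - q*δ₁)/(γ₁*(q-1))| :=
          clamp_lip _ _ _ _
      _ = |x - y| / (q-1) := by rw [e, abs_div, abs_of_pos hd]
  have lip₂ : ∀ x y, |F₂ x - F₂ y| ≤ |x - y| / (q-1) := by
    intro x y
    have hd : (0:ℝ) < q - 1 := by linarith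
    have e : (γ₂*x - q*δ₂)/(γ₂*(q-1)) - (γ₂*y - q*δ₂)/(γ₂*(q-1)) = (x - y)/(q-1) := by
      field_simp; ring
    calc |F₂ x - F₂ y| ≤ |(γ₂*x - q*δ₂)/(γ₂*(q-1)) - (γ₂*y - q*δ₂)/(γ₂*(q-1))| :=
          clamp_lip _ _ _ _
      _ = |x - y| / (q-1) := by rw [e, abs_div, abs_of_pos hd]
  -- existence of fixed point of G = F₁ ∘ F₂ via IVT
  have hGcont : Continuous (fun x => F₁ (F₂ x) - x) := by
    have c1 : Continuous F₁ := by
      rw [hF₁]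
      exact continuous_const.max (continuous_const.min
        (((continuous_const.mul continuous_id).sub continuous_const).div_const _))
    have c2 : Continuous F₂ := by
      rw [hF₂]
      exact continuous_const.max (continuous_const.min
        (((continuous_const.mul continuous_id).sub continuous_const).div_const _))
    exact (c1.comp c2).sub continuous_id
  have hflo : (0:ℝ) ≤ F₁ (F₂ lo₁) - lo₁ := by
    have := (hF₁mem (F₂ lo₁)).1; linarith
  have hfhi : F₁ (F₂ hi₁) - hi₁ ≤ 0 := by
    have := (hF₁mem (F₂ hi₁)).2; linarith
  obtain ⟨a, ha, hfa⟩ := intermediate_value_Icc' h₁ hGcont.continuousOn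
    (Set.mem_Icc.mpr ⟨hfhi, hflo⟩ : (0:ℝ) ∈ Icc _ _)
  have hGa : F₁ (F₂ a) = a := by linarith [sub_eq_zero.mp hfa]
  refine ⟨(a, F₂ a), (char (a, F₂ a)).mpr ⟨ha, hF₂mem a, hGa.symm, rfl⟩, ?_⟩
  intro p hp
  obtain ⟨hm1, _, he1, he2⟩ := (char p).mp hp
  -- p.1 and a are both fixed points of the contraction F₁ ∘ F₂
  have hfix : F₁ (F₂ p.1) = p.1 := by rw [← he2, ← he1]
  have hd : (0:ℝ) < q - 1 := by linarith
  have key : |p.1 - a| ≤ |p.1 - a| / (q-1) / (q-1) := by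
    calc |p.1 - a| = |F₁ (F₂ p.1) - F₁ (F₂ a)| := by rw [hfix, hGa]
      _ ≤ |F₂ p.1 - F₂ a| / (q-1) := lip₁ _ _
      _ ≤ |p.1 - a| / (q-1) / (q-1) := by
          apply div_le_div_of_nonneg_right (lip₂ _ _) hd.le
  have h0 : (0:ℝ) ≤ |p.1 - a| := abs_nonneg _
  have heq : p.1 = a := by
    have h' : |p.1 - a| * ((q-1)*(q-1)) ≤ |p.1 - a| := by
      rw [div_div] at key
      calc |p.1 - a| * ((q-1)*(q-1)) ≤ (|p.1 - a| / ((q-1)*(q-1))) * ((q-1)*(q-1)) := by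
            apply mul_le_mul_of_nonneg_right key (by positivity)
        _ = |p.1 - a| := by field_simp
    have hk : (1:ℝ) < (q-1)*(q-1) := by nlinarith
    have hle : |p.1 - a| ≤ 0 := by nlinarith
    have := abs_eq_zero.mp (le_antisymm hle h0)
    linarith
  have heq2 : p.2 = F₂ a := by rw [he2, heq]
  exact Prod.ext heq heq2
end

section
/- Let 0 < q < 1, γ₁, γ₂ > 0, δ₁, δ₂ ∈ ℝ, and 0 < lo_j ≤ hi_j with γ_j·lo_j + δ_j > 0 for j = 1, 2, and define u(a₁, a₂) = Real.log (γ₁·a₁ + δ₁) + Real.log (γ₂·a₂ + δ₂) − q · Real.log (a₁ + a₂) on Δ = [lo₁,hi₁] × [lo₂,hi₂]. Then every Nash equilibrium (a₁, a₂) ∈ Δ (a pair such that u(b, a₂) ≤ u(a₁, a₂) for all b ∈ [lo₁,hi₁] and u(a₁, b) ≤ u(a₁, a₂) for all b ∈ [lo₂,hi₂]) satisfies a₁ ∈ {lo₁, hi₁} and a₂ ∈ {lo₂, hi₂}; that is, all Nash equilibria lie on the four corners of Δ. -/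
lemma aux_corner (γ δ q s lo hi : ℝ) (hγ : 0 < γ) (hq0 : 0 < q) (hq1 : q < 1)
    (hlo : 0 < lo) (hs : 0 < s) (hp : γ * lo + δ > 0)
    (a : ℝ) (ha : a ∈ Set.Icc lo hi)
    (hmax : ∀ b ∈ Set.Icc lo hi,
      Real.log (γ * b + δ) - q * Real.log (b + s) ≤
      Real.log (γ * a + δ) - q * Real.log (a + s)) :
    a = lo ∨ a = hi := by
  by_contra hc
  push_neg at hc
  obtain ⟨hne1, hne2⟩ := hc
  have hla : lo < a := lt_of_le_of_ne ha.1 (Ne.symm hne1)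
  have hah : a < hi := lt_of_le_of_ne ha.2 hne2
  set f : ℝ → ℝ := fun x => Real.log (γ * x + δ) - q * Real.log (x + s) with hf
  -- positivity facts for x ≥ lo
  have hpos : ∀ x, lo ≤ x → 0 < γ * x + δ ∧ 0 < x + s := by
    intro x hx
    constructor
    · have : γ * lo ≤ γ * x := by nlinarith
      linarith
    · linarith
  have hder : ∀ x, lo ≤ x → HasDerivAt f (γ / (γ * x + δ) - q * (1 / (x + s))) x := by
    intro x hx
    obtain ⟨h1, h2⟩ := hpos x hx
    have d1 : HasDerivAt (fun x => γ * x + δ) γ x := by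
      simpa using ((hasDerivAt_id x).const_mul γ).add_const δ
    have d2 : HasDerivAt (fun x => x + s) 1 x := (hasDerivAt_id x).add_const s
    have l1 : HasDerivAt (fun x => Real.log (γ * x + δ)) (γ / (γ * x + δ)) x :=
      d1.log h1.ne'
    have l2 : HasDerivAt (fun x => Real.log (x + s)) (1 / (x + s)) x := by
      simpa using d2.log h2.ne'
    exact l1.sub (l2.const_mul q)
  -- sign of derivative controlled by L x = γ*(x+s) - q*(γ*x+δ)
  have hsign : ∀ x, lo ≤ x → 0 < γ * (x + s) - q * (γ * x + δ) →
      0 < γ / (γ * x + δ) - q * (1 / (x + s)) := by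
    intro x hx hL
    obtain ⟨h1, h2⟩ := hpos x hx
    rw [sub_pos, mul_one_div, div_lt_div_iff₀ h2 h1]
    nlinarith
  have hsign' : ∀ x, lo ≤ x → γ * (x + s) - q * (γ * x + δ) < 0 →
      γ / (γ * x + δ) - q * (1 / (x + s)) < 0 := by
    intro x hx hL
    obtain ⟨h1, h2⟩ := hpos x hx
    rw [sub_neg, mul_one_div, div_lt_div_iff₀ h1 h2]
    nlinarith
  have hcont : ∀ x ∈ Set.Icc lo hi, ContinuousAt f x := by
    intro x hx
    exact (hder x hx.1).continuousAt
  -- L is strictly increasing in x since γ*(1-q) > 0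
  rcases le_or_gt (γ * (a + s) - q * (γ * a + δ)) 0 with hL | hL
  · -- f strictly decreasing on [lo, a], so f lo > f a
    have hanti : StrictAntiOn f (Set.Icc lo a) := by
      apply strictAntiOn_of_deriv_neg (convex_Icc lo a)
      · exact fun x hx => (hcont x ⟨hx.1, hx.2.trans ha.2⟩).continuousWithinAt
      · intro x hx
        rw [interior_Icc] at hx
        have hx1 : lo ≤ x := hx.1.le
        rw [(hder x hx1).deriv]
        apply hsign' x hx1
        nlinarith [mul_pos (mul_pos hγ (by linarith : (0:ℝ) < 1 - q)) (by linarith [hx.2] : (0:ℝ) < a - x)]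
    have := hanti ⟨le_refl lo, hla.le⟩ ⟨hla.le, le_refl a⟩ hla
    have hle : f lo ≤ f a := hmax lo ⟨le_refl lo, (hla.trans hah).le⟩
    linarith
  · -- f strictly increasing on [a, hi], so f hi > f a
    have hmono : StrictMonoOn f (Set.Icc a hi) := by
      apply strictMonoOn_of_deriv_pos (convex_Icc a hi)
      · exact fun x hx => (hcont x ⟨ha.1.trans hx.1, hx.2⟩).continuousWithinAt
      · intro x hx
        rw [interior_Icc] at hx
        have hx1 : lo ≤ x := ha.1.trans hx.1.le
        rw [(hder x hx1).deriv]
        apply hsign x hx1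
        nlinarith [mul_pos (mul_pos hγ (by linarith : (0:ℝ) < 1 - q)) (by linarith [hx.1] : (0:ℝ) < x - a)]
    have := hmono ⟨le_refl a, hah.le⟩ ⟨hah.le, le_refl hi⟩ hah
    have hle : f hi ≤ f a := hmax hi ⟨ha.1.trans hah.le, le_refl hi⟩
    linarith


/-- For `0 < q < 1`, every Nash equilibrium of the common-goal
game with payoff `u(a₁,a₂) = log(γ₁a₁+δ₁) + log(γ₂a₂+δ₂) − q·log(a₁+a₂)` on
`Δ = [lo₁,hi₁] × [lo₂,hi₂]` lies on one of the four corners of `Δ`. -/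
theorem stmt_10 (q γ₁ γ₂ δ₁ δ₂ lo₁ hi₁ lo₂ hi₂ : ℝ) (hq0 : 0 < q) (hq1 : q < 1)
    (hγ₁ : 0 < γ₁) (hγ₂ : 0 < γ₂)
    (hlo₁ : 0 < lo₁) (h₁ : lo₁ ≤ hi₁) (hlo₂ : 0 < lo₂) (h₂ : lo₂ ≤ hi₂)
    (hp₁ : γ₁ * lo₁ + δ₁ > 0) (hp₂ : γ₂ * lo₂ + δ₂ > 0)
    (u : ℝ → ℝ → ℝ)
    (hu : ∀ a₁ a₂, u a₁ a₂ =
      Real.log (γ₁ * a₁ + δ₁) + Real.log (γ₂ * a₂ + δ₂) - q * Real.log (a₁ + a₂)) :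
    ∀ a₁ ∈ Set.Icc lo₁ hi₁, ∀ a₂ ∈ Set.Icc lo₂ hi₂,
      (∀ b ∈ Set.Icc lo₁ hi₁, u b a₂ ≤ u a₁ a₂) →
      (∀ b ∈ Set.Icc lo₂ hi₂, u a₁ b ≤ u a₁ a₂) →
      (a₁ = lo₁ ∨ a₁ = hi₁) ∧ (a₂ = lo₂ ∨ a₂ = hi₂) := by
  intro a₁ ha₁ a₂ ha₂ hm1 hm2
  have hs₂ : 0 < a₂ := lt_of_lt_of_le hlo₂ ha₂.1
  have hs₁ : 0 < a₁ := lt_of_lt_of_le hlo₁ ha₁.1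
  constructor
  · apply aux_corner γ₁ δ₁ q a₂ lo₁ hi₁ hγ₁ hq0 hq1 hlo₁ hs₂ hp₁ a₁ ha₁
    intro b hb
    have := hm1 b hb
    rw [hu, hu] at this
    linarith
  · apply aux_corner γ₂ δ₂ q a₁ lo₂ hi₂ hγ₂ hq0 hq1 hlo₂ hs₁ hp₂ a₂ ha₂
    intro b hb
    have := hm2 b hb
    rw [hu, hu] at this
    rw [add_comm a₁ b, add_comm a₁ a₂] at this
    linarith
end

section
/- For j ∈ {1,2} let m_j ≠ 0, n_j ≠ 0, d_j > 0, and let L_j(D) = (1/2)·Real.log (m_j² / (m_j²·d_j + n_j²·(D − e_j))) be defined for D ≥ e_j, let q_j > 0, D̄_j > 0, and define the one-shot payoffs u₁(a₁, a₂) = −L₁(a₁) + (q₁/2)·Real.log (D̄₁/a₂) and u₂(a₂, a₁) = −L₂(a₂) + (q₂/2)·Real.log (D̄₂/a₁), where agent j's action a_j lies in [e_j, H_j] with e_j ≤ H_j. Then: (i) for every fixed opponent action a_i > 0, the unique maximizer of a_j ↦ u_j(a_j, a_i) over [e_j, H_j] is H_j, and u_j(H_j, a_i) > u_j(a_j, a_i)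 for every a_j ∈ [e_j, H_j) (playing the maximal distortion is a strictly dominant strategy); (ii) consequently (H₁, H₂) is the unique pair (a₁, a₂) ∈ [e₁,H₁]×[e₂,H₂] such that u₁(a₁,a₂) ≥ u₁(b,a₂) for all b ∈ [e₁,H₁] and u₂(a₂,a₁) ≥ u₂(b,a₁) for all b ∈ [e₂,H₂]. -/
lemma stmt_12_key (m n d e a H : ℝ) (hm : m ≠ 0) (hn : n ≠ 0) (hd : 0 < d)
    (ha : e ≤ a) (hlt : a < H) :
    (1 / 2) * Real.log (m ^ 2 / (m ^ 2 * d + n ^ 2 * (H - e))) <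
    (1 / 2) * Real.log (m ^ 2 / (m ^ 2 * d + n ^ 2 * (a - e))) := by
  have hm2 : 0 < m ^ 2 := by positivity
  have hn2 : 0 < n ^ 2 := by positivity
  have hda : 0 < m ^ 2 * d + n ^ 2 * (a - e) := by
    have : 0 ≤ n ^ 2 * (a - e) := by nlinarith
    nlinarith
  have hdH : m ^ 2 * d + n ^ 2 * (a - e) < m ^ 2 * d + n ^ 2 * (H - e) := by nlinarith
  have harg : m ^ 2 / (m ^ 2 * d + n ^ 2 * (H - e)) < m ^ 2 / (m ^ 2 * d + n ^ 2 * (a - e)) :=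
    div_lt_div_of_pos_left hm2 hda hdH
  have hpos : 0 < m ^ 2 / (m ^ 2 * d + n ^ 2 * (H - e)) := div_pos hm2 (by nlinarith)
  have := Real.log_lt_log hpos harg
  linarith

/-- In the one-shot competitive-privacy game with payoffs
`u_j(a_j, a_i) = −L_j(a_j) + (q_j/2)·log(D̄_j/a_i)`, playing the maximal
distortion `H_j` is a strictly dominant strategy for each agent, and
`(H₁, H₂)` is the unique Nash equilibrium. -/
theorem stmt_12 (m₁ n₁ m₂ n₂ d₁ d₂ e₁ e₂ q₁ q₂ Dbar₁ Dbar₂ H₁ H₂ : ℝ)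
    (hm₁ : m₁ ≠ 0) (hn₁ : n₁ ≠ 0) (hm₂ : m₂ ≠ 0) (hn₂ : n₂ ≠ 0)
    (hd₁ : 0 < d₁) (hd₂ : 0 < d₂) (hq₁ : 0 < q₁) (hq₂ : 0 < q₂)
    (hDbar₁ : 0 < Dbar₁) (hDbar₂ : 0 < Dbar₂) (hH₁ : e₁ ≤ H₁) (hH₂ : e₂ ≤ H₂)
    (L₁ L₂ : ℝ → ℝ)
    (hL₁ : ∀ D, L₁ D = (1 / 2) * Real.log (m₁ ^ 2 / (m₁ ^ 2 * d₁ + n₁ ^ 2 * (D - e₁))))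
    (hL₂ : ∀ D, L₂ D = (1 / 2) * Real.log (m₂ ^ 2 / (m₂ ^ 2 * d₂ + n₂ ^ 2 * (D - e₂))))
    (u₁ u₂ : ℝ → ℝ → ℝ)
    (hu₁ : ∀ a₁ a₂, u₁ a₁ a₂ = -L₁ a₁ + (q₁ / 2) * Real.log (Dbar₁ / a₂))
    (hu₂ : ∀ a₂ a₁, u₂ a₂ a₁ = -L₂ a₂ + (q₂ / 2) * Real.log (Dbar₂ / a₁)) :
    (∀ ai : ℝ, 0 < ai → ∀ a₁ ∈ Set.Ico e₁ H₁, u₁ a₁ ai < u₁ H₁ ai) ∧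
    (∀ ai : ℝ, 0 < ai → ∀ a₂ ∈ Set.Ico e₂ H₂, u₂ a₂ ai < u₂ H₂ ai) ∧
    (∀ a₁ ∈ Set.Icc e₁ H₁, ∀ a₂ ∈ Set.Icc e₂ H₂,
      ((∀ b ∈ Set.Icc e₁ H₁, u₁ b a₂ ≤ u₁ a₁ a₂) ∧
       (∀ b ∈ Set.Icc e₂ H₂, u₂ b a₁ ≤ u₂ a₂ a₁)) ↔ (a₁ = H₁ ∧ a₂ = H₂)) := by
  -- strict dominance for any opponent action (payoff difference is independent of it)
  have dom₁ : ∀ ai a₁, e₁ ≤ a₁ → a₁ < H₁ → u₁ a₁ ai < u₁ H₁ ai := by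
    intro ai a₁ h1 h2
    rw [hu₁, hu₁, hL₁, hL₁]
    have := stmt_12_key m₁ n₁ d₁ e₁ a₁ H₁ hm₁ hn₁ hd₁ h1 h2
    linarith
  have dom₂ : ∀ ai a₂, e₂ ≤ a₂ → a₂ < H₂ → u₂ a₂ ai < u₂ H₂ ai := by
    intro ai a₂ h1 h2
    rw [hu₂, hu₂, hL₂, hL₂]
    have := stmt_12_key m₂ n₂ d₂ e₂ a₂ H₂ hm₂ hn₂ hd₂ h1 h2
    linarith
  refine ⟨fun ai _ a₁ ha => dom₁ ai a₁ ha.1 ha.2,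
          fun ai _ a₂ ha => dom₂ ai a₂ ha.1 ha.2, ?_⟩
  intro a₁ ha₁ a₂ ha₂
  constructor
  · rintro ⟨h1, h2⟩
    constructor
    · by_contra h
      have hlt : a₁ < H₁ := lt_of_le_of_ne ha₁.2 h
      exact absurd (h1 H₁ ⟨hH₁, le_refl _⟩) (not_le.mpr (dom₁ a₂ a₁ ha₁.1 hlt))
    · by_contra h
      have hlt : a₂ < H₂ := lt_of_le_of_ne ha₂.2 h
      exact absurd (h2 H₂ ⟨hH₂, le_refl _⟩) (not_le.mpr (dom₂ a₁ a₂ ha₂.1 hlt))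
  · rintro ⟨rfl, rfl⟩
    refine ⟨fun b hb => ?_, fun b hb => ?_⟩
    · rcases eq_or_lt_of_le hb.2 with h | h
      · rw [h]
      · exact le_of_lt (dom₁ _ b hb.1 h)
    · rcases eq_or_lt_of_le hb.2 with h | h
      · rw [h]
      · exact le_of_lt (dom₂ _ b hb.1 h)
end

section
/- Let m ≠ 0, n ≠ 0, d_j > 0, e ∈ ℝ, q > 0, D̄_self > 0, and define L(D) = (1/2)·Real.log (m² / (m²·d_j + n²·(D − e))) and u(a, b) = −L(a) + (q/2)·Real.log (D̄_self/b). Let ρ ∈ (0,1), let H > e, let b₀ > 0 be the opponent's fixed action, and let D̂ ∈ [e, H) be any deviation. Then for every natural number τ ≥ 1: (1−ρ)·( (∑_{t=0}^{τ−2} ρ^t)·u(H, b₀) + ρ^{τ−1}·u(D̂, b₀) + ρ^τ·(∑'_{t:ℕ} ρ^t)·u(H, b₀) ) < u(H, b₀). That is, deviating at any single stage from 'no data sharing beyond the minimum requirement' strictly decreases the discounted payoff. -/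
/-- One-stage deviation from "no data sharing beyond the minimum
requirement": deviating to any `D̂ ∈ [e, H)` at a single stage `τ` strictly
decreases the discounted payoff compared to always playing `H`. -/
theorem stmt_18 (m n d e q Dself ρ H b₀ Dhat : ℝ) (hm : m ≠ 0) (hn : n ≠ 0)
    (hd : 0 < d) (hq : 0 < q) (hDself : 0 < Dself)
    (hρ0 : 0 < ρ) (hρ1 : ρ < 1) (hH : e < H) (hb₀ : 0 < b₀)
    (hD1 : e ≤ Dhat) (hD2 : Dhat < H)
    (L : ℝ → ℝ)
    (hL : ∀ D, L D = (1 / 2) * Real.log (m ^ 2 / (m ^ 2 * d + n ^ 2 * (D - e))))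
    (u : ℝ → ℝ → ℝ)
    (hu : ∀ a b, u a b = -L a + (q / 2) * Real.log (Dself / b)) :
    ∀ τ : ℕ, 1 ≤ τ →
      (1 - ρ) * ((∑ t ∈ Finset.range (τ - 1), ρ ^ t) * u H b₀
        + ρ ^ (τ - 1) * u Dhat b₀
        + ρ ^ τ * (∑' t : ℕ, ρ ^ t) * u H b₀) < u H b₀ := by
  intro τ hτ
  have hm2 : (0:ℝ) < m ^ 2 := by positivity
  have hn2 : (0:ℝ) < n ^ 2 := by positivity
  -- L H < L Dhat
  have hden1 : (0:ℝ) < m ^ 2 * d + n ^ 2 * (Dhat - e) := by nlinarith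
  have hden2 : (0:ℝ) < m ^ 2 * d + n ^ 2 * (H - e) := by nlinarith
  have hLlt : L H < L Dhat := by
    rw [hL, hL]
    have hlt : m ^ 2 / (m ^ 2 * d + n ^ 2 * (H - e))
        < m ^ 2 / (m ^ 2 * d + n ^ 2 * (Dhat - e)) := by
      apply div_lt_div_of_pos_left hm2 hden1
      nlinarith
    have := Real.log_lt_log (by positivity) hlt
    linarith
  have huD : u Dhat b₀ < u H b₀ := by
    rw [hu, hu]; linarith
  -- geometric sums
  have hρne : (1:ℝ) - ρ ≠ 0 := by linarith
  have htsum : (∑' t : ℕ, ρ ^ t) = (1 - ρ)⁻¹ :=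
    tsum_geometric_of_lt_one hρ0.le hρ1
  have hsum : (1 - ρ) * (∑ t ∈ Finset.range (τ - 1), ρ ^ t) = 1 - ρ ^ (τ - 1) := by
    have := geom_sum_eq (by linarith : ρ ≠ 1) (τ - 1)
    rw [this]
    have h1 : ρ - 1 ≠ 0 := by linarith
    field_simp
    ring
  have hτ' : τ - 1 + 1 = τ := Nat.succ_pred_eq_of_pos hτ
  have hpow : ρ ^ τ = ρ ^ (τ - 1) * ρ := by rw [← pow_succ, hτ']
  have hw : (0:ℝ) < (1 - ρ) * ρ ^ (τ - 1) := mul_pos (by linarith) (pow_pos hρ0 _)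
  have key : (1 - ρ) * ((∑ t ∈ Finset.range (τ - 1), ρ ^ t) * u H b₀
        + ρ ^ (τ - 1) * u Dhat b₀
        + ρ ^ τ * (∑' t : ℕ, ρ ^ t) * u H b₀)
      = u H b₀ + (1 - ρ) * ρ ^ (τ - 1) * (u Dhat b₀ - u H b₀) := by
    rw [htsum, hpow]
    have : (1 - ρ) * ((∑ t ∈ Finset.range (τ - 1), ρ ^ t) * u H b₀
        + ρ ^ (τ - 1) * u Dhat b₀
        + ρ ^ (τ - 1) * ρ * (1 - ρ)⁻¹ * u H b₀)
        = ((1 - ρ) * (∑ t ∈ Finset.range (τ - 1), ρ ^ t)) * u H b₀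
        + (1 - ρ) * ρ ^ (τ - 1) * u Dhat b₀
        + ρ ^ (τ - 1) * ρ * ((1 - ρ) * (1 - ρ)⁻¹) * u H b₀ := by ring
    rw [this, hsum, mul_inv_cancel₀ hρne]
    ring
  rw [key]
  nlinarith [mul_pos hw (sub_pos.mpr huD)]
end

section
/- Let m ≠ 0, n ≠ 0, d_j > 0, e ∈ ℝ, q > 0, and define L(D) = (1/2)·Real.log (m² / (m²·d_j + n²·(D − e))) and u(a, b) = −L(a) + (q/2)·Real.log (D̄_self/b). Let e ≤ D*ᵢ < D̄ᵢ and 0 < D*_self < D̄_self, set u* = u(D*ᵢ, D*_self) and u_n = u(D̄ᵢ, D̄_self), and assume the agreement condition (q/2)·Real.log (D̄_self/D*_self) > L(D*ᵢ) − L(D̄ᵢ). Let ρ ∈ ℝ satisfy 2·(L(D*ᵢ) − L(D̄ᵢ)) / (q·Real.log (D̄_self/D*_self)) < ρ < 1. Then for every deviation D ∈ (D*ᵢ, D̄ᵢ] and every natural number τ ≥ 1: (1−ρ)·( (∑_{t=0}^{τ−2} ρ^t)·u* + ρ^{τ−1}·u(D, D*_self) + ρ^τ·(∑'_{t:ℕ}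 ρ^t)·u_n ) < u*. That is, a one-stage deviation from the agreement point, followed by reversion to no cooperation, yields a strictly lower discounted payoff than honoring the agreement. -/
/-- Under the agreement condition and the discount-factor lower
bound (eq:new_coop_condition), any one-stage deviation `D ∈ (D*ᵢ, D̄ᵢ]` from
the agreement point, followed by reversion to no cooperation, yields a
strictly lower discounted payoff than honoring the agreement forever. -/
theorem stmt_19 (m n d e q Dbarself Dstarself Dstari Dbari ρ : ℝ)
    (hm : m ≠ 0) (hn : n ≠ 0) (hd : 0 < d) (hq : 0 < q)
    (hei : e ≤ Dstari) (hDi : Dstari < Dbari)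
    (hs0 : 0 < Dstarself) (hs : Dstarself < Dbarself)
    (L : ℝ → ℝ)
    (hL : ∀ D, L D = (1 / 2) * Real.log (m ^ 2 / (m ^ 2 * d + n ^ 2 * (D - e))))
    (u : ℝ → ℝ → ℝ)
    (hu : ∀ a b, u a b = -L a + (q / 2) * Real.log (Dbarself / b))
    (ustar un : ℝ) (hustar : ustar = u Dstari Dstarself) (hun : un = u Dbari Dbarself)
    (hagree : (q / 2) * Real.log (Dbarself / Dstarself) > L Dstari - L Dbari)
    (hρlb : 2 * (L Dstari - L Dbari) / (q * Real.log (Dbarself / Dstarself)) < ρ)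
    (hρ1 : ρ < 1) :
    ∀ D, Dstari < D → D ≤ Dbari → ∀ τ : ℕ, 1 ≤ τ →
      (1 - ρ) * ((∑ t ∈ Finset.range (τ - 1), ρ ^ t) * ustar
        + ρ ^ (τ - 1) * u D Dstarself
        + ρ ^ τ * (∑' t : ℕ, ρ ^ t) * un) < ustar := by
  intro D hD1 hD2 τ hτ
  have hm2 : 0 < m ^ 2 := by positivity
  have hn2 : 0 < n ^ 2 := by positivity
  have hlog : 0 < Real.log (Dbarself / Dstarself) :=
    Real.log_pos ((one_lt_div hs0).mpr hs)
  -- monotonicity of L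
  have hLmono : ∀ a b : ℝ, e ≤ a → a < b → L b < L a := by
    intro a b ha hab
    have hA : 0 < m ^ 2 * d + n ^ 2 * (a - e) := by nlinarith
    have hB : 0 < m ^ 2 * d + n ^ 2 * (b - e) := by nlinarith
    have hAB : m ^ 2 * d + n ^ 2 * (a - e) < m ^ 2 * d + n ^ 2 * (b - e) := by nlinarith
    have : m ^ 2 / (m ^ 2 * d + n ^ 2 * (b - e)) < m ^ 2 / (m ^ 2 * d + n ^ 2 * (a - e)) :=
      div_lt_div_of_pos_left hm2 hA hAB
    have := Real.log_lt_log (by positivity) this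
    rw [hL a, hL b]; linarith
  have hΔ : 0 < L Dstari - L Dbari := by
    have := hLmono Dstari Dbari hei hDi
    linarith
  have hρ0 : 0 < ρ := lt_trans (by positivity) hρlb
  have hρK : L Dstari - L Dbari < ρ * ((q / 2) * Real.log (Dbarself / Dstarself)) := by
    have hql : 0 < q * Real.log (Dbarself / Dstarself) := by positivity
    have := (div_lt_iff₀ hql).mp hρlb
    nlinarith
  have hLD : L Dbari ≤ L D := by
    rcases lt_or_eq_of_le hD2 with h | h
    · exact (hLmono D Dbari (le_trans hei hD1.le) h).le
    · rw [h]
  -- key one-stage inequality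
  have hbs : Dbarself ≠ 0 := (lt_trans hs0 hs).ne'
  have hun0 : un = -L Dbari := by
    rw [hun, hu, div_self hbs, Real.log_one]; ring
  have key : (1 - ρ) * u D Dstarself + ρ * un < ustar := by
    rw [hustar, hu, hu, hun0]
    nlinarith [hρK, hLD, hρ0, hρ1]
  -- sums
  set k := τ - 1 with hk
  have hτk : τ = k + 1 := (Nat.succ_pred_eq_of_pos hτ).symm
  have hρne : ρ ≠ 1 := ne_of_lt hρ1
  have hsum1 : (∑ t ∈ Finset.range k, ρ ^ t) = (ρ ^ k - 1) / (ρ - 1) := geom_sum_eq hρne k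
  have hsum2 : (∑' t : ℕ, ρ ^ t) = (1 - ρ)⁻¹ :=
    tsum_geometric_of_lt_one hρ0.le hρ1
  have hpow : 0 < ρ ^ k := pow_pos hρ0 k
  have h1ρ : 0 < 1 - ρ := by linarith
  rw [hsum1, hsum2, hτk, pow_succ]
  have hid : (1 - ρ) * ((ρ ^ k - 1) / (ρ - 1) * ustar + ρ ^ k * u D Dstarself
      + ρ ^ k * ρ * (1 - ρ)⁻¹ * un)
      = ustar - ρ ^ k * ustar + ρ ^ k * ((1 - ρ) * u D Dstarself + ρ * un) := by
    have hne : ρ - 1 ≠ 0 := sub_ne_zero.mpr hρne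
    have hne2 : (1 : ℝ) - ρ ≠ 0 := h1ρ.ne'
    field_simp
    ring
  rw [hid]
  linarith [mul_lt_mul_of_pos_left key hpow]
end
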